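/- arXiv:2507.06969 — 2 statements merged into one kernel-verified Lean document; each statement's English description precedes it below -/
import Mathlib

section
/- Let D (records) and V (predicates) be nonempty measurable spaces, let f be a trade-off function, let P be a probability measure on D, let e : D × V → {0,1} be jointly measurable, let ρ be a Markov kernel from D to V, and let ν be a probability measure on V such that for every z ∈ D the pair (ν, ρ(z)) satisfies the f-DP inequality. Then the strong predicate-singling-out success probability satisfies ∫_D ρ(z)({v ∈ V : e(z,v) = 1}) dP(z) ≤ 1 − f( sup_{v ∈ V} P({z ∈ D : e(z,v) = 1}) ). -/
open MeasureTheory ProbabilityTheory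

/-- A trade-off function: convex, continuous, non-increasing on `[0,1]`,
taking values in `[0,1]` with `f α ≤ 1 - α`. -/
def IsTradeoff (f : ℝ → ℝ) : Prop :=
  ConvexOn ℝ (Set.Icc (0:ℝ) 1) f ∧ ContinuousOn f (Set.Icc (0:ℝ) 1) ∧
  AntitoneOn f (Set.Icc (0:ℝ) 1) ∧
  ∀ x ∈ Set.Icc (0:ℝ) 1, f x ∈ Set.Icc (0:ℝ) 1 ∧ f x ≤ 1 - x

/-- The pair `(P, Q)` satisfies the `f`-DP inequality: every randomized test `φ` has
`∫ φ dQ ≤ 1 - f (∫ φ dP)`. -/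
def FDPIneq {Θ : Type*} [MeasurableSpace Θ] (f : ℝ → ℝ) (P Q : Measure Θ) : Prop :=
  ∀ φ : Θ → ℝ, Measurable φ → (∀ θ, φ θ ∈ Set.Icc (0:ℝ) 1) →
    ∫ θ, φ θ ∂Q ≤ 1 - f (∫ θ, φ θ ∂P)

/-! Testing the `f`-DP inequality of `(ν, ρ z)` against the indicator of the section
`A_z = {v | e z v}` gives `ρ z (A_z) ≤ 1 - f (ν A_z)` for every record `z`. Averaging over `z ∼ P`
and applying Jensen's inequality to the concave function `1 - f` bounds the success probability
by `1 - f (∫ ν A_z dP)`. By Fubini this mean is `∫ P B_v dν` with `B_v = {z | e z v}`, which is at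
most `⨆ v, P B_v`; since `f` is non-increasing, the bound follows. -/

open Set

lemma FDPIneq.measureReal_le {Θ : Type*} [MeasurableSpace Θ] {f : ℝ → ℝ} {P Q : Measure Θ}
    (h : FDPIneq f P Q) {A : Set Θ} (hA : MeasurableSet A) : Q.real A ≤ 1 - f (P.real A) := by
  have h01 : ∀ θ, A.indicator (1 : Θ → ℝ) θ ∈ Icc (0 : ℝ) 1 := fun θ ↦ by
    by_cases hθ : θ ∈ A <;> simp [hθ]
  simpa only [integral_indicator_one hA] using h _ (measurable_one.indicator hA) h01

lemma ContinuousOn.measurable_comp {α β γ : Type*} [MeasurableSpace α] [TopologicalSpace β]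
    [MeasurableSpace β] [OpensMeasurableSpace β] [TopologicalSpace γ] [MeasurableSpace γ]
    [BorelSpace γ] {f : β → γ} {s : Set β} (hf : ContinuousOn f s) {g : α → β}
    (hg : Measurable g) (hgs : ∀ x, g x ∈ s) : Measurable fun x ↦ f (g x) :=
  (continuousOn_iff_continuous_domRestrict.mp hf).measurable.comp (hg.subtype_mk (h := hgs))

section Tradeoff

variable {α : Type*} [MeasurableSpace α] {μ : Measure α} {f : ℝ → ℝ} {g : α → ℝ}

lemma IsTradeoff.convexOn (hf : IsTradeoff f) : ConvexOn ℝ (Icc 0 1) f := hf.1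

lemma IsTradeoff.continuousOn (hf : IsTradeoff f) : ContinuousOn f (Icc 0 1) := hf.2.1

lemma IsTradeoff.antitoneOn (hf : IsTradeoff f) : AntitoneOn f (Icc 0 1) := hf.2.2.1

lemma IsTradeoff.mem_Icc (hf : IsTradeoff f) {x : ℝ} (hx : x ∈ Icc 0 1) : f x ∈ Icc 0 1 :=
  (hf.2.2.2 x hx).1

lemma integrable_of_forall_mem_Icc_zero_one [IsFiniteMeasure μ] (hg : Measurable g)
    (hg01 : ∀ x, g x ∈ Icc (0 : ℝ) 1) : Integrable g μ :=
  .of_bound hg.aestronglyMeasurable 1 <| ae_of_all _ fun x ↦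
    abs_le.2 ⟨by linarith [(hg01 x).1], (hg01 x).2⟩

lemma IsTradeoff.integrable_comp [IsFiniteMeasure μ] (hf : IsTradeoff f) (hg : Measurable g)
    (hg01 : ∀ x, g x ∈ Icc (0 : ℝ) 1) : Integrable (fun x ↦ f (g x)) μ :=
  integrable_of_forall_mem_Icc_zero_one (hf.continuousOn.measurable_comp hg hg01)
    fun x ↦ hf.mem_Icc (hg01 x)

/-- Jensen's inequality for the concave function `1 - f`. -/
lemma IsTradeoff.integral_one_sub_comp_le [IsProbabilityMeasure μ] (hf : IsTradeoff f)
    (hg : Measurable g) (hg01 : ∀ x, g x ∈ Icc (0 : ℝ) 1) :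
    ∫ x, 1 - f (g x) ∂μ ≤ 1 - f (∫ x, g x ∂μ) := by
  have hfg : Integrable (fun x ↦ f (g x)) μ := hf.integrable_comp hg hg01
  have jensen : f (∫ x, g x ∂μ) ≤ ∫ x, f (g x) ∂μ :=
    hf.convexOn.map_integral_le hf.continuousOn isClosed_Icc (ae_of_all _ hg01)
      (integrable_of_forall_mem_Icc_zero_one hg hg01) hfg
  rw [integral_sub (integrable_const 1) hfg, integral_const, probReal_univ, one_smul]
  linarith

end Tradeoff

section ProdSections

variable {D V : Type*} [MeasurableSpace D] [MeasurableSpace V] {P : Measure D} {ν : Measure V}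
  {s : Set (D × V)}

lemma integral_measureReal_prodMk_left_eq_right [IsFiniteMeasure P] [IsFiniteMeasure ν]
    (hs : MeasurableSet s) :
    ∫ z, ν.real (Prod.mk z ⁻¹' s) ∂P = ∫ v, P.real ((·, v) ⁻¹' s) ∂ν := by
  simp only [measureReal_def]
  rw [integral_toReal (measurable_measure_prodMk_left hs).aemeasurable
      (ae_of_all _ fun _ ↦ measure_lt_top _ _),
    integral_toReal (measurable_measure_prodMk_right hs).aemeasurable
      (ae_of_all _ fun _ ↦ measure_lt_top _ _),
    ← Measure.prod_apply hs, Measure.prod_apply_symm hs]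

lemma integral_measureReal_prodMk_left_le_iSup [IsFiniteMeasure P] [IsProbabilityMeasure ν]
    (hs : MeasurableSet s) :
    ∫ z, ν.real (Prod.mk z ⁻¹' s) ∂P ≤ ⨆ v, P.real ((·, v) ⁻¹' s) := by
  have hbdd : BddAbove (range fun v ↦ P.real ((·, v) ⁻¹' s)) :=
    ⟨P.real univ, forall_mem_range.2 fun _ ↦ measureReal_mono (subset_univ _)⟩
  rw [integral_measureReal_prodMk_left_eq_right hs]
  calc ∫ v, P.real ((·, v) ⁻¹' s) ∂ν
      ≤ ∫ _, ⨆ v, P.real ((·, v) ⁻¹' s) ∂ν :=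
        integral_mono_of_nonneg (ae_of_all _ fun _ ↦ measureReal_nonneg) (integrable_const _)
          (ae_of_all _ fun v ↦ le_ciSup hbdd v)
    _ = ⨆ v, P.real ((·, v) ⁻¹' s) := by rw [integral_const, probReal_univ, one_smul]

end ProdSections

theorem stmt_4_general {D V : Type*} [MeasurableSpace D] [MeasurableSpace V]
    (f : ℝ → ℝ) (hf : IsTradeoff f)
    (P : Measure D) [IsProbabilityMeasure P]
    (e : D → V → Bool) (he : Measurable (Function.uncurry e))
    (ρ : Kernel D V)
    (ν : Measure V) [IsProbabilityMeasure ν]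
    (hDP : ∀ z : D, FDPIneq f ν (ρ z)) :
    ∫ z, ((ρ z) {v : V | e z v = true}).toReal ∂P ≤
      1 - f (⨆ v : V, (P {z : D | e z v = true}).toReal) := by
  set s : Set (D × V) := {p | e p.1 p.2 = true}
  have hs : MeasurableSet s := he (measurableSet_singleton true)
  have hA z : MeasurableSet (Prod.mk z ⁻¹' s) := measurable_prodMk_left hs
  have hν01 z : ν.real (Prod.mk z ⁻¹' s) ∈ Icc (0 : ℝ) 1 :=
    ⟨measureReal_nonneg, measureReal_le_one⟩
  have hνmeas : Measurable fun z ↦ ν.real (Prod.mk z ⁻¹' s) :=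
    (measurable_measure_prodMk_left hs).ennreal_toReal
  have hsup : ⨆ v, P.real ((·, v) ⁻¹' s) ∈ Icc (0 : ℝ) 1 :=
    ⟨Real.iSup_nonneg fun _ ↦ measureReal_nonneg,
      Real.iSup_le (fun _ ↦ measureReal_le_one) zero_le_one⟩
  have hmean_le : ∫ z, ν.real (Prod.mk z ⁻¹' s) ∂P ≤ ⨆ v, P.real ((·, v) ⁻¹' s) :=
    integral_measureReal_prodMk_left_le_iSup hs
  have hmean : ∫ z, ν.real (Prod.mk z ⁻¹' s) ∂P ∈ Icc (0 : ℝ) 1 :=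
    ⟨integral_nonneg fun z ↦ (hν01 z).1, hmean_le.trans hsup.2⟩
  calc ∫ z, (ρ z).real (Prod.mk z ⁻¹' s) ∂P
      ≤ ∫ z, 1 - f (ν.real (Prod.mk z ⁻¹' s)) ∂P :=
        integral_mono_of_nonneg (ae_of_all _ fun _ ↦ measureReal_nonneg)
          ((integrable_const 1).sub (hf.integrable_comp hνmeas hν01))
          (ae_of_all _ fun z ↦ (hDP z).measureReal_le (hA z))
    _ ≤ 1 - f (∫ z, ν.real (Prod.mk z ⁻¹' s) ∂P) := hf.integral_one_sub_comp_le hνmeas hν01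
    _ ≤ 1 - f (⨆ v, P.real ((·, v) ⁻¹' s)) :=
        sub_le_sub_left (hf.antitoneOn hmean hsup hmean_le) 1

/-- SPSO bullet of Theorem 3: `f`-DP bound on strong predicate-singling-out success.
`e z v = true` means predicate `v` matches record `z`. -/
theorem stmt_4 {D V : Type*} [MeasurableSpace D] [MeasurableSpace V]
    [Nonempty D] [Nonempty V]
    (f : ℝ → ℝ) (hf : IsTradeoff f)
    (P : Measure D) [IsProbabilityMeasure P]
    (e : D → V → Bool) (he : Measurable (Function.uncurry e))
    (ρ : Kernel D V) [IsMarkovKernel ρ]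
    (ν : Measure V) [IsProbabilityMeasure ν]
    (hDP : ∀ z : D, FDPIneq f ν (ρ z)) :
    ∫ z, ((ρ z) {v : V | e z v = true}).toReal ∂P ≤
      1 - f (⨆ v : V, (P {z : D | e z v = true}).toReal) :=
  stmt_4_general f hf P e he ρ ν hDP
end

section
/- Let n ≥ 1, let D and Θ be measurable spaces, let f be a trade-off function, and let M be a Markov kernel from Dⁿ (functions Fin n → D) to Θ satisfying f-DP with respect to the replace-one relation. Define f⁽ⁿ⁾ : [0,1] → [0,1] by f⁽ⁿ⁾(x) = 1 − (1−f)∘ⁿ(x), where (1−f)∘ⁿ is the n-fold composition of the map x ↦ 1 − f(x). Then for every probability measure P on D and every jointly measurable R : Dⁿ × Θ → [0,1], ∫_{Dⁿ} ∫_{Dⁿ} ∫_Θ R(T, θ) d(M(S))(θ) dPⁿ(T) dPⁿ(S) ≤ 1 − f⁽ⁿ⁾( ∫_{Dⁿ} ∫_Θ R(S, θ) d(M(S))(θ) dPⁿ(S) ). -/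
open MeasureTheory ProbabilityTheory

open Set

/-!
Put `g = 1 - f`; the `f`-DP inequality for a pair `(P, Q)` says `∫ φ dQ ≤ g (∫ φ dP)` for
every test `φ`. Walking from `S` to `T` one coordinate at a time and using that `g` is monotone
gives group privacy, `∫ φ dM(S) ≤ gⁿ (∫ φ dM(T))` for all `S, T`. Taking `φ = R(T, ·)` and
integrating over `S` and `T` bounds the left-hand side by `∫ gⁿ(u(T)) dPⁿ(T)`, where
`u(T) = ∫ R(T, θ) dM(T)(θ)`; since `gⁿ` is concave, Jensen's inequality bounds this by
`gⁿ (∫ u dPⁿ) = 1 - f⁽ⁿ⁾ (∫ u dPⁿ)`.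
-/

theorem ConcaveOn.iterate {𝕜 β : Type*} [Semiring 𝕜] [PartialOrder 𝕜] [AddCommMonoid β]
    [PartialOrder β] [SMul 𝕜 β] {s : Set β} {g : β → β} (hg : ConcaveOn 𝕜 s g)
    (hmono : MonotoneOn g s) (hmaps : MapsTo g s s) : ∀ n, ConcaveOn 𝕜 s g^[n]
  | 0 => concaveOn_id hg.1
  | n + 1 => by
    rw [Function.iterate_succ']
    refine ⟨hg.1, fun x hx y hy a b ha hb hab => ?_⟩
    have hgn := hmaps.iterate n
    calc a • g (g^[n] x) + b • g (g^[n] y) ≤ g (a • g^[n] x + b • g^[n] y) :=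
          hg.2 (hgn hx) (hgn hy) ha hb hab
      _ ≤ g (g^[n] (a • x + b • y)) :=
          hmono (hg.1 (hgn hx) (hgn hy) ha hb hab) (hgn (hg.1 hx hy ha hb hab))
            ((hg.iterate hmono hmaps n).2 hx hy ha hb hab)

theorem integral_mem_Icc_zero_one {α : Type*} [MeasurableSpace α] (μ : Measure α)
    [IsProbabilityMeasure μ] {φ : α → ℝ} (hφ : ∀ x, φ x ∈ Icc (0 : ℝ) 1) :
    ∫ x, φ x ∂μ ∈ Icc (0 : ℝ) 1 :=
  ⟨integral_nonneg fun x => (hφ x).1,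
    (integral_mono_of_nonneg (ae_of_all _ fun x => (hφ x).1) (integrable_const 1)
      (ae_of_all _ fun x => (hφ x).2)).trans_eq (by simp)⟩

theorem ContinuousOn.comp_measurable {α β γ : Type*} [MeasurableSpace α] [TopologicalSpace β]
    [MeasurableSpace β] [OpensMeasurableSpace β] [TopologicalSpace γ] [MeasurableSpace γ]
    [BorelSpace γ] {g : β → γ} {s : Set β} (hg : ContinuousOn g s) {u : α → β}
    (hu : Measurable u) (hus : ∀ x, u x ∈ s) : Measurable (g ∘ u) :=
  hg.domRestrict.measurable.comp (hu.subtype_mk (h := hus))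

theorem integral_comp_le_of_concaveOn_Icc {α : Type*} [MeasurableSpace α] {μ : Measure α}
    [IsProbabilityMeasure μ] {g : ℝ → ℝ} (hg : ConcaveOn ℝ (Icc 0 1) g)
    (hgc : ContinuousOn g (Icc 0 1)) (hmaps : MapsTo g (Icc 0 1) (Icc 0 1)) {u : α → ℝ}
    (hu : Measurable u) (hu01 : ∀ x, u x ∈ Icc (0 : ℝ) 1) :
    ∫ x, g (u x) ∂μ ≤ g (∫ x, u x ∂μ) :=
  hg.le_map_integral hgc isClosed_Icc (ae_of_all _ hu01)
    (.of_mem_Icc 0 1 hu.aemeasurable (ae_of_all _ hu01))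
    (.of_mem_Icc 0 1 (hgc.comp_measurable hu hu01).aemeasurable
      (ae_of_all _ fun x => hmaps (hu01 x)))

namespace IsTradeoff

variable {f : ℝ → ℝ}

theorem mapsTo_one_sub (hf : IsTradeoff f) : MapsTo (fun y => 1 - f y) (Icc 0 1) (Icc 0 1) := by
  intro x hx
  obtain ⟨⟨h0, h1⟩, -⟩ := hf.2.2.2 x hx
  constructor <;> linarith

theorem monotoneOn_one_sub (hf : IsTradeoff f) : MonotoneOn (fun y => 1 - f y) (Icc 0 1) :=
  fun _ hx _ hy hxy => sub_le_sub_left (hf.2.2.1 hx hy hxy) 1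

theorem concaveOn_one_sub (hf : IsTradeoff f) : ConcaveOn ℝ (Icc 0 1) (fun y => 1 - f y) :=
  (concaveOn_const 1 (convex_Icc 0 1)).sub hf.1

theorem continuousOn_one_sub (hf : IsTradeoff f) : ContinuousOn (fun y => 1 - f y) (Icc 0 1) :=
  continuousOn_const.sub hf.2.1

end IsTradeoff

def ReplaceOne {ι X : Type*} (S S' : ι → X) : Prop :=
  ∃ i, ∀ j, j ≠ i → S j = S' j

theorem le_iterate_card_of_replaceOne {ι X α : Type*} [DecidableEq ι] [Preorder α]
    {s : Set α} {g : α → α} (hg : MonotoneOn g s) (hmaps : MapsTo g s s)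
    {a : (ι → X) → α} (ha : ∀ S, a S ∈ s) (hstep : ∀ S S', ReplaceOne S S' → a S ≤ g (a S'))
    (t : Finset ι) {S T : ι → X} (hST : ∀ j ∉ t, S j = T j) :
    a S ≤ g^[t.card] (a T) := by
  induction t using Finset.induction_on generalizing S with
  | empty =>
    obtain rfl : S = T := funext fun j => hST j (Finset.notMem_empty j)
    exact le_rfl
  | insert i t hi ih =>
    let U := Function.update S i (T i)
    have hSU : ReplaceOne S U := ⟨i, fun j hj => (Function.update_of_ne hj _ _).symm⟩
    have hUT : ∀ j ∉ t, U j = T j := by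
      intro j hj
      by_cases hji : j = i
      · simp [U, hji]
      · simp [U, hji, hST j (by simp [hji, hj])]
    calc a S ≤ g (a U) := hstep S U hSU
      _ ≤ g (g^[t.card] (a T)) := hg (ha U) (hmaps.iterate _ (ha T)) (ih hUT)
      _ = g^[(insert i t).card] (a T) := by
        rw [Finset.card_insert_of_notMem hi, Function.iterate_succ_apply']

theorem fdpIneq_iterate_of_replaceOne {ι D Θ : Type*} [Fintype ι] [MeasurableSpace D]
    [MeasurableSpace Θ] {f : ℝ → ℝ} (hf : IsTradeoff f) (M : Kernel (ι → D) Θ)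
    [IsMarkovKernel M] (hDP : ∀ S S' : ι → D, ReplaceOne S S' → FDPIneq f (M S') (M S))
    (S T : ι → D) :
    FDPIneq (fun x => 1 - (fun y => 1 - f y)^[Fintype.card ι] x) (M T) (M S) := by
  classical
  intro φ hφ hφ01
  simpa using le_iterate_card_of_replaceOne hf.monotoneOn_one_sub hf.mapsTo_one_sub
    (a := fun S => ∫ θ, φ θ ∂(M S)) (fun S => integral_mem_Icc_zero_one _ hφ01)
    (fun S S' h => hDP S S' h φ hφ hφ01) Finset.univ (S := S) (T := T) (by simp)

theorem stmt_15_general {D Θ : Type*} [MeasurableSpace D] [MeasurableSpace Θ]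
    (n : ℕ)
    (f : ℝ → ℝ) (hf : IsTradeoff f)
    (M : Kernel (Fin n → D) Θ) [IsMarkovKernel M]
    (hDP : ∀ S S' : Fin n → D, (∃ i : Fin n, ∀ j : Fin n, j ≠ i → S j = S' j) →
      FDPIneq f (M S') (M S))
    (fn : ℝ → ℝ) (hfn : ∀ x, fn x = 1 - (fun y => 1 - f y)^[n] x)
    (P : Measure D) [IsProbabilityMeasure P]
    (R : (Fin n → D) → Θ → ℝ) (hR : Measurable (Function.uncurry R))
    (hR01 : ∀ S θ, R S θ ∈ Set.Icc (0:ℝ) 1) :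
    ∫ S, ∫ T, ∫ θ, R T θ ∂(M S) ∂(Measure.pi fun _ : Fin n => P)
        ∂(Measure.pi fun _ : Fin n => P) ≤
      1 - fn (∫ S, ∫ θ, R S θ ∂(M S) ∂(Measure.pi fun _ : Fin n => P)) := by
  set μ := Measure.pi fun _ : Fin n => P
  set g : ℝ → ℝ := fun y => 1 - f y
  set u : (Fin n → D) → ℝ := fun T => ∫ θ, R T θ ∂(M T)
  have hu01 : ∀ T, u T ∈ Icc (0 : ℝ) 1 := fun T => integral_mem_Icc_zero_one _ (hR01 T)
  have hgroup : ∀ S T, ∫ θ, R T θ ∂(M S) ≤ g^[n] (u T) := fun S T => by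
    simpa using fdpIneq_iterate_of_replaceOne hf M hDP S T (R T) hR.of_uncurry_left (hR01 T)
  have hgn_cont : ContinuousOn g^[n] (Icc 0 1) :=
    hf.continuousOn_one_sub.iterate hf.mapsTo_one_sub n
  have hu : Measurable u := hR.stronglyMeasurable.integral_kernel_prod_right.measurable
  have hgn_int : Integrable (fun T => g^[n] (u T)) μ :=
    .of_mem_Icc 0 1 (hgn_cont.comp_measurable hu hu01).aemeasurable
      (ae_of_all _ fun T => hf.mapsTo_one_sub.iterate n (hu01 T))
  have hjensen : ∫ T, g^[n] (u T) ∂μ ≤ g^[n] (∫ T, u T ∂μ) :=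
    integral_comp_le_of_concaveOn_Icc
      (hf.concaveOn_one_sub.iterate hf.monotoneOn_one_sub hf.mapsTo_one_sub n) hgn_cont
      (hf.mapsTo_one_sub.iterate n) hu hu01
  calc ∫ S, ∫ T, ∫ θ, R T θ ∂(M S) ∂μ ∂μ ≤ ∫ _ : Fin n → D, ∫ T, g^[n] (u T) ∂μ ∂μ := by
        refine integral_mono_of_nonneg (ae_of_all _ fun S => ?_) (integrable_const _)
          (ae_of_all _ fun S => ?_)
        · exact integral_nonneg fun T => (integral_mem_Icc_zero_one _ (hR01 T)).1
        · exact integral_mono_of_nonneg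
            (ae_of_all _ fun T => (integral_mem_Icc_zero_one _ (hR01 T)).1) hgn_int
            (ae_of_all _ (hgroup S))
    _ = ∫ T, g^[n] (u T) ∂μ := by simp
    _ ≤ g^[n] (∫ T, u T ∂μ) := hjensen
    _ = 1 - fn (∫ T, u T ∂μ) := by rw [hfn]; ring

/-- Lemma D.2, second inequality: generalization for non-linear queries via
group privacy, with `f⁽ⁿ⁾ = 1 - (1 - f)∘ⁿ`. -/
theorem stmt_15 {D Θ : Type*} [MeasurableSpace D] [MeasurableSpace Θ]
    (n : ℕ) (hn : 1 ≤ n)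
    (f : ℝ → ℝ) (hf : IsTradeoff f)
    (M : Kernel (Fin n → D) Θ) [IsMarkovKernel M]
    (hDP : ∀ S S' : Fin n → D, (∃ i : Fin n, ∀ j : Fin n, j ≠ i → S j = S' j) →
      FDPIneq f (M S') (M S))
    (fn : ℝ → ℝ) (hfn : ∀ x, fn x = 1 - (fun y => 1 - f y)^[n] x)
    (P : Measure D) [IsProbabilityMeasure P]
    (R : (Fin n → D) → Θ → ℝ) (hR : Measurable (Function.uncurry R))
    (hR01 : ∀ S θ, R S θ ∈ Set.Icc (0:ℝ) 1) :
    ∫ S, ∫ T, ∫ θ, R T θ ∂(M S) ∂(Measure.pi fun _ : Fin n => P)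
        ∂(Measure.pi fun _ : Fin n => P) ≤
      1 - fn (∫ S, ∫ θ, R S θ ∂(M S) ∂(Measure.pi fun _ : Fin n => P)) :=
  stmt_15_general n f hf M hDP fn hfn P R hR hR01
end
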